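/- Let D₁ be the infinite matrix over the field ℚ(q, α, β) with D₁(i, i+1) = β⁻¹ and all other entries 0, and let E₁ be the infinite lower-triangular matrix with E₁(i,j) = β^{i-j}(α⁻¹ q^{j-1} C(i-1, j-1) + ∑_{r=0}^{j-2} C(i-j+r, r) q^r) for j ≤ i and 0 otherwise. Then D₁E₁ − qE₁D₁ = D₁ + E₁. -/

import Mathlib

open Finset

/-- `D₁` indexed by positive integers (`i : ℕ` stands for row `i+1`):
`D₁(i, i+1) = β⁻¹` and all other entries `0`. -/
noncomputable def D1 {K : Type*} [Field K] (β : K) (i j : ℕ) : K :=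
  if j = i + 1 then β⁻¹ else 0

/-- `E₁` indexed by positive integers (`i : ℕ` stands for row `i+1`); in 1-indexed form,
`E₁(i,j) = β^{i-j} (α⁻¹ q^{j-1} C(i-1, j-1) + ∑_{r=0}^{j-2} C(i-j+r, r) q^r)` for `j ≤ i`,
and `0` otherwise. -/
noncomputable def E1 {K : Type*} [Field K] (q α β : K) (i j : ℕ) : K :=
  if j ≤ i then
    β ^ (i - j) * (α⁻¹ * q ^ j * (i.choose j : K) +
      ∑ r ∈ range j, ((i - j + r).choose r : K) * q ^ r)
  else 0

/-- Entrywise matrix product; since each row of the factors has finitely many nonzero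
entries (all with index `< i + j + 2`), this finite sum equals the full product entry. -/
noncomputable def matMul {K : Type*} [Field K] (A B : ℕ → ℕ → K) (i j : ℕ) : K :=
  ∑ k ∈ range (i + j + 2), A i k * B k j

/-!
Left multiplication by `D₁` shifts rows up and right multiplication shifts columns right, each
with a factor `β⁻¹`. The identity therefore reduces to the recurrence
`E₁(i+1, j+1) = q E₁(i, j) + β E₁(i, j+1) + δᵢⱼ`, which follows from Pascal's rule, applied
both to the binomial term and, termwise, to the sums `∑ C(n+r, r) qʳ`.
-/

section Shift

variable {K : Type*} [Field K] (β : K)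

lemma matMul_D1_left (B : ℕ → ℕ → K) (i j : ℕ) :
    matMul (D1 β) B i j = β⁻¹ * B (i + 1) j := by
  unfold matMul D1
  rw [sum_eq_single (i + 1)]
  · simp
  · intro k _ hk
    simp [hk]
  · intro h
    exact absurd (mem_range.2 (by omega)) h

lemma matMul_D1_right_succ (A : ℕ → ℕ → K) (i j : ℕ) :
    matMul A (D1 β) i (j + 1) = A i j * β⁻¹ := by
  unfold matMul D1
  rw [sum_eq_single j]
  · simp
  · intro k _ hk
    simp [Ne.symm hk]
  · intro h
    exact absurd (mem_range.2 (by omega)) h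

lemma matMul_D1_right_zero (A : ℕ → ℕ → K) (i : ℕ) : matMul A (D1 β) i 0 = 0 :=
  sum_eq_zero fun _ _ => by simp [D1]

end Shift

lemma sum_choose_add_mul_pow_succ {R : Type*} [CommRing R] (q : R) (n m : ℕ) :
    ∑ r ∈ range (m + 1), ((n + 1 + r).choose r : R) * q ^ r
      = q * ∑ r ∈ range m, ((n + 1 + r).choose r : R) * q ^ r
        + ∑ r ∈ range (m + 1), ((n + r).choose r : R) * q ^ r := by
  induction m with
  | zero => simp
  | succ m ih =>
    have pascal : ((n + 1 + (m + 1)).choose (m + 1) : R)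
        = ((n + 1 + m).choose m : R) + ((n + (m + 1)).choose (m + 1) : R) := by
      rw [show n + 1 + (m + 1) = (n + 1 + m) + 1 by omega, Nat.choose_succ_succ,
        show n + 1 + m = n + (m + 1) by omega]
      push_cast
      ring
    conv_lhs => rw [sum_range_succ, ih]
    rw [sum_range_succ (fun r => ((n + r).choose r : R) * q ^ r) (m + 1),
      sum_range_succ (fun r => ((n + 1 + r).choose r : R) * q ^ r) m, pascal]
    ring

section E1

variable {K : Type*} [Field K] (q α β : K)

lemma E1_of_lt {i j : ℕ} (h : i < j) : E1 q α β i j = 0 :=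
  if_neg (by omega)

lemma E1_add_self (n j : ℕ) :
    E1 q α β (n + j) j = β ^ n * (α⁻¹ * q ^ j * ((n + j).choose j : K) +
      ∑ r ∈ range j, ((n + r).choose r : K) * q ^ r) := by
  simp [E1]

lemma E1_self (i : ℕ) : E1 q α β i i = α⁻¹ * q ^ i + ∑ r ∈ range i, q ^ r := by
  simp [E1]

lemma E1_succ_zero (i : ℕ) : E1 q α β (i + 1) 0 = β * E1 q α β i 0 := by
  simp [E1, pow_succ]
  ring

lemma E1_succ_succ (i j : ℕ) :
    E1 q α β (i + 1) (j + 1)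
      = q * E1 q α β i j + β * E1 q α β i (j + 1) + if j = i then 1 else 0 := by
  rcases lt_trichotomy j i with hji | rfl | hij
  · obtain ⟨n, rfl⟩ : ∃ n, i = n + (j + 1) := ⟨i - (j + 1), by omega⟩
    rw [show n + (j + 1) + 1 = (n + 1) + (j + 1) by omega, E1_add_self,
      show n + (j + 1) = (n + 1) + j by omega, E1_add_self,
      show (n + 1) + j = n + (j + 1) by omega, E1_add_self, if_neg (by omega),
      sum_choose_add_mul_pow_succ, show n + 1 + (j + 1) = n + (j + 1) + 1 by omega,
      Nat.choose_succ_succ]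
    push_cast
    ring
  · rw [E1_self, E1_self, E1_of_lt q α β (Nat.lt_succ_self j), if_pos rfl, geom_sum_succ]
    ring
  · rw [E1_of_lt q α β (by omega), E1_of_lt q α β hij, E1_of_lt q α β (by omega),
      if_neg (by omega)]
    ring

end E1

theorem stmt2_general {K : Type*} [Field K] (q α β : K) (hβ : β ≠ 0) (i j : ℕ) :
    matMul (D1 β) (E1 q α β) i j - q * matMul (E1 q α β) (D1 β) i j
      = D1 β i j + E1 q α β i j := by
  rw [matMul_D1_left]
  cases j with
  | zero =>
    rw [matMul_D1_right_zero, E1_succ_zero, D1, if_neg (by omega)]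
    field_simp
    ring
  | succ j =>
    rw [matMul_D1_right_succ, E1_succ_succ, D1]
    simp only [Nat.add_right_cancel_iff]
    split_ifs <;> field_simp <;> ring

/-- over the field `ℚ(q, α, β)` (formalized as an arbitrary field with
`α, β ≠ 0`), `D₁E₁ − qE₁D₁ = D₁ + E₁`. -/
theorem stmt2 {K : Type*} [Field K] (q α β : K) (hα : α ≠ 0) (hβ : β ≠ 0) (i j : ℕ) :
    matMul (D1 β) (E1 q α β) i j - q * matMul (E1 q α β) (D1 β) i j
      = D1 β i j + E1 q α β i j :=
  stmt2_general q α β hβ i j
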